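/- arXiv:2401.07034 — 2 statements merged into one kernel-verified Lean document; each statement's English description precedes it below -/
import Mathlib

section
/- If ψ is a Hamiltonian diffeomorphism with γ(ψ) > R > R' > 0, and for all sufficiently large k one has b_{Rk}(ψ;L₀,L₁,k) ≥ e^{hk} for some h > 0, then along a suitable subsequence of integers k' one has b_{R'k'}(ψ;L₀,L₁,k') ≥ e^{h'k'} with h' = h·(γ(ψ) - R')/(γ(ψ) - R). Concretely: given Z = γ(ψ) and the stability property b_{ε-δ}(ψ';L₀,L₁,k) ≥ b_ε(ψ;L₀,L₁,k) whenever d_γ(ψ',ψ) < δ < ε (applied with ψ' = ψ^{k'}, ψ = ψ^k), the R'-strong barcode entropy satisfies H^{R'}(ψ;L₀,L₁) ≥ ((γ(ψ)-R')/(γ(ψ)-R))·H^R(ψ;L₀,L₁). -/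
/-!
Stability bounds the bars of `ψ^k` above threshold `tk` by those of a shorter iterate
`ψ^{k'}` above `tk - (k - k')γ(ψ)`. Taking `k' ≈ qk` with `q` slightly below
`(γ - R)/(γ - R')` turns thresholds just under `Rk` into thresholds `r k'` with `r` just under
`R'`, so `(1/k) log b` at scale `R` is at most `q` times `(1/k') log b` at scale `R'`.
-/

open Filter

/-- The `R`-strong relative barcode entropy, defined abstractly from the
bar-counting function `b ε k = b_ε(ψ;L₀,L₁,k)`:
`H^R = lim_{R̂→R⁻} limsup_{k→∞} (1/k)·log b(R̂k, k)`, which (by monotonicity)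
equals the infimum over `R̂ < R`. -/
noncomputable def Hstrong (b : ℝ → ℕ → ℕ) (R : ℝ) : EReal :=
  ⨅ Rh : Set.Iio R,
    Filter.limsup (fun k : ℕ => ((Real.log (b ((Rh : ℝ) * k) k) / k : ℝ) : EReal))
      Filter.atTop

noncomputable def barGrowth (b : ℝ → ℕ → ℕ) (ρ : ℝ) : EReal :=
  limsup (fun k : ℕ => ((Real.log (b (ρ * k) k) / k : ℝ) : EReal)) atTop

lemma Hstrong_le_barGrowth (b : ℝ → ℕ → ℕ) {R ρ : ℝ} (hρ : ρ < R) :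
    Hstrong b R ≤ barGrowth b ρ :=
  iInf_le (fun ρ : Set.Iio R => barGrowth b ρ) ⟨ρ, hρ⟩

lemma le_Hstrong {b : ℝ → ℕ → ℕ} {R : ℝ} {x : EReal} (h : ∀ ρ < R, x ≤ barGrowth b ρ) :
    x ≤ Hstrong b R :=
  le_iInf fun ρ => h ρ ρ.2

lemma Real.log_natCast_monotone : Monotone fun n : ℕ => Real.log n := by
  intro m n hmn
  rcases m.eq_zero_or_pos with rfl | hm
  · simpa using Real.log_natCast_nonneg n
  · exact Real.log_le_log (by exact_mod_cast hm) (by exact_mod_cast hmn)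

lemma barGrowth_antitone {b : ℝ → ℕ → ℕ} (hmono : ∀ k, Antitone fun ε => b ε k) :
    Antitone (barGrowth b) := by
  intro ρ ρ' hρ
  refine limsup_le_limsup (Eventually.of_forall fun k => ?_)
  refine EReal.coe_le_coe_iff.mpr (div_le_div_of_nonneg_right ?_ k.cast_nonneg)
  exact Real.log_natCast_monotone (hmono k (mul_le_mul_of_nonneg_right hρ k.cast_nonneg))

lemma limsup_div_le_mul_limsup_div {u v : ℕ → ℝ} {φ : ℕ → ℕ} {q : ℝ} (hq : 0 ≤ q)
    (hv : 0 ≤ v) (hφ : Tendsto φ atTop atTop) (hφq : ∀ᶠ k in atTop, (φ k : ℝ) ≤ q * k)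
    (huv : ∀ᶠ k in atTop, u k ≤ v (φ k)) :
    limsup (fun k => ((u k / k : ℝ) : EReal)) atTop
      ≤ q * limsup (fun k => ((v k / k : ℝ) : EReal)) atTop := by
  have hpos : ∀ᶠ k in atTop, 0 < φ k := hφ.eventually_gt_atTop 0
  calc limsup (fun k => ((u k / k : ℝ) : EReal)) atTop
      ≤ limsup (fun k => (q : EReal) * ((v (φ k) / φ k : ℝ) : EReal)) atTop := by
        refine limsup_le_limsup (hφq.and (huv.and hpos) |>.mono fun k ⟨hk, hu, hk'⟩ => ?_)
        have hk'₀ : (0 : ℝ) < φ k := by exact_mod_cast hk'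
        have hk₀ : (0 : ℝ) < k := by nlinarith
        dsimp only
        rw [← EReal.coe_mul, EReal.coe_le_coe_iff, div_le_iff₀ hk₀, mul_div_assoc', mul_comm,
          ← mul_div_assoc, le_div_iff₀ hk'₀]
        nlinarith [mul_le_mul_of_nonneg_right hu hk'₀.le, mul_le_mul_of_nonneg_left hk (hv (φ k))]
    _ = q * limsup ((fun k => ((v k / k : ℝ) : EReal)) ∘ φ) atTop :=
        EReal.limsup_const_mul_of_nonneg_of_ne_top (EReal.coe_nonneg.mpr hq) (EReal.coe_ne_top q)
    _ ≤ q * limsup (fun k => ((v k / k : ℝ) : EReal)) atTop :=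
        mul_le_mul_of_nonneg_left hφ.limsup_comp_le_limsup (EReal.coe_nonneg.mpr hq)

lemma bars_le_of_stability {b : ℝ → ℕ → ℕ} {Z : ℝ} (hmono : ∀ k, Antitone fun ε => b ε k)
    (hstab : ∀ (ε : ℝ) (k k' : ℕ), |(k : ℝ) - (k' : ℝ)| * Z < ε →
      b ε k ≤ b (ε - |(k : ℝ) - (k' : ℝ)| * Z) k')
    {ε ε' : ℝ} {k k' : ℕ} (hε' : 0 < ε')
    (h : |(k : ℝ) - k'| * Z + ε' ≤ ε) : b ε k ≤ b ε' k' :=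
  (hstab ε k k' (by linarith)).trans (hmono k' (by linarith))

lemma barGrowth_le_mul_barGrowth {b : ℝ → ℕ → ℕ} {Z : ℝ} (hmono : ∀ k, Antitone fun ε => b ε k)
    (hstab : ∀ (ε : ℝ) (k k' : ℕ), |(k : ℝ) - (k' : ℝ)| * Z < ε →
      b ε k ≤ b (ε - |(k : ℝ) - (k' : ℝ)| * Z) k')
    {r q₀ q : ℝ} (hr : 0 < r) (hrZ : r ≤ Z) (hq₀ : 0 < q₀)
    (hq₀1 : q₀ ≤ 1) (hq₀q : q₀ < q) :
    barGrowth b (Z - q₀ * (Z - r)) ≤ q * barGrowth b r := by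
  refine limsup_div_le_mul_limsup_div (by linarith) (fun k => Real.log_natCast_nonneg _)
    (φ := fun k => ⌈q₀ * k⌉₊) ?_ ?_ ?_
  · exact tendsto_nat_ceil_atTop.comp
      (tendsto_natCast_atTop_atTop.const_mul_atTop hq₀)
  · filter_upwards [(tendsto_natCast_atTop_atTop (R := ℝ)).eventually_ge_atTop
      (1 / (q - q₀))] with k hk
    have hceil := Nat.ceil_lt_add_one (mul_nonneg hq₀.le k.cast_nonneg)
    rw [div_le_iff₀ (by linarith)] at hk
    linarith
  · filter_upwards [eventually_gt_atTop 0] with k hk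
    have hk₀ : (0 : ℝ) < k := by exact_mod_cast hk
    have hceil : q₀ * k ≤ ⌈q₀ * k⌉₊ := Nat.le_ceil _
    have hceil_le : (⌈q₀ * k⌉₊ : ℝ) ≤ k := by
      exact_mod_cast Nat.ceil_le.mpr (by nlinarith)
    refine Real.log_natCast_monotone (bars_le_of_stability hmono hstab (by positivity) ?_)
    -- `(k - k')Z + r k' = kZ - k'(Z - r) ≤ kZ - q₀k(Z - r)`, as `k' = ⌈q₀k⌉ ≥ q₀k` and `r ≤ Z`
    rw [abs_of_nonneg (by linarith)]
    nlinarith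

/-- Proposition (strict monotonicity of strong barcode entropy, part (iii)):
if `γ(ψ) = Z > R > R' > 0` and the bar counts satisfy the `γ`-stability
property `b ε k ≤ b (ε - |k - k'|·Z) k'` (coming from `d_γ(ψ^k, ψ^{k'}) ≤ |k-k'|·Z`),
then `H^{R'}(ψ;L₀,L₁) ≥ ((Z - R')/(Z - R)) · H^R(ψ;L₀,L₁)`. -/
theorem strong_barcode_entropy_strict_monotone
    (b : ℝ → ℕ → ℕ) (Z R R' : ℝ)
    (hmono : ∀ k, Antitone fun ε => b ε k)
    (hstab : ∀ (ε : ℝ) (k k' : ℕ), |(k : ℝ) - (k' : ℝ)| * Z < ε →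
      b ε k ≤ b (ε - |(k : ℝ) - (k' : ℝ)| * Z) k')
    (hR'0 : 0 < R') (hR'R : R' < R) (hRZ : R < Z) :
    (((Z - R') / (Z - R) : ℝ) : EReal) * Hstrong b R ≤ Hstrong b R' := by
  refine le_Hstrong fun s hs => ?_
  set r := max s (R' / 2)
  have hr : 0 < r := lt_max_of_lt_right (by linarith)
  have hrR' : r < R' := max_lt hs (by linarith)
  set q := (Z - R) / (Z - R')
  have hq1 : q < 1 := (div_lt_one (by linarith)).mpr (by linarith)
  obtain ⟨q₀, hq₀l, hq₀q⟩ : ∃ q₀, (Z - R) / (Z - r) < q₀ ∧ q₀ < q :=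
    exists_between (div_lt_div_of_pos_left (by linarith) (by linarith) (by linarith))
  have hq₀ : 0 < q₀ := lt_trans (div_pos (by linarith) (by linarith)) hq₀l
  have ht : Z - q₀ * (Z - r) < R := by
    rw [div_lt_iff₀ (by linarith)] at hq₀l
    linarith
  have hc : (0 : EReal) ≤ ((Z - R') / (Z - R) : ℝ) :=
    EReal.coe_nonneg.mpr (div_nonneg (by linarith) (by linarith))
  calc (((Z - R') / (Z - R) : ℝ) : EReal) * Hstrong b R
      ≤ ((Z - R') / (Z - R) : ℝ) * (q * barGrowth b r) :=
        mul_le_mul_of_nonneg_left ((Hstrong_le_barGrowth b ht).trans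
          (barGrowth_le_mul_barGrowth hmono hstab hr (by linarith) hq₀ (by linarith) hq₀q)) hc
    _ = barGrowth b r := by
        have hcq : (Z - R') / (Z - R) * q = 1 := by
          simp only [q]
          field_simp [show Z - R ≠ 0 by linarith, show Z - R' ≠ 0 by linarith]
        rw [← mul_assoc, ← EReal.coe_mul, hcq, EReal.coe_one, one_mul]
    _ ≤ barGrowth b s := barGrowth_antitone hmono (le_max_left _ _)
end

section
/- Let (𝒞,∂) be a finite-dimensional chain complex over a field with an action function 𝒜 (a non-Archimedean filtration) such that ∂ strictly decreases action. Suppose (𝒞₁',∂₁'),…,(𝒞ₚ',∂ₚ') are subcomplexes spanned by subsets of a fixed basis, with pairwise trivial intersections 𝒞ᵢ' ∩ 𝒞ⱼ' = {0} for i ≠ j, each with nonzero homology, and each ε-isolated in (𝒞,∂), meaning: (i) for every nonzero y ∈ 𝒞ᵢ', 𝒜(y) − 𝒜((∂−∂ᵢ')y) > ε, and (ii) for every nonzero y ∈ (𝒞ᵢ')^⊥ and ζ ∈ 𝒞ᵢ' with ζ + ∂y ∈ (𝒞ᵢ')^⊥, one has 𝒜(y) − 𝒜(ζ) > ε. Then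 the number b_ε(𝒞) of bars of length greater than ε in the barcode of (𝒞,∂,𝒜) satisfies b_ε(𝒞) ≥ p/2. -/
/-!
Choose in each subcomplex a cycle `ξᵢ` of minimal action among those representing a nonzero
class of `(𝒞ᵢ', ∂ᵢ')`. Isolation makes `ξᵢ` quasi `ε`-robust, with `𝒜(∂ξᵢ) < 𝒜(ξᵢ) − ε`: a
primitive `y` of `ξᵢ` up to lower terms with `𝒜(y) ≤ 𝒜(ξᵢ) + ε` would, after projecting `∂y`
to `𝒞ᵢ'`, exhibit a homologous cycle of smaller action. The leading basis vectors of the `ξᵢ`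
lie in pairwise disjoint sets, so the `ξᵢ` have distinct actions and every sum of them inherits
these properties from its top term.

Split the indices according to whether `∂ξᵢ = ∂wᵢ` for some `wᵢ` of lower action. If so, the
cycles `ξᵢ + wᵢ` are independent and their span meets `im ∂` in an `ε`-robust subspace, so there
are at most `b*_ε + dim H` of them; if not, the `∂ξᵢ` span an `ε`-robust subspace of dimension
their number. Hence `p ≤ 2 b*_ε + dim H ≤ 2 b_ε`.
-/

open Finsupp

variable {ι : Type*} [Fintype ι] [DecidableEq ι]

/-- The action (filtration level) of a vector in the `ZMod 2`-vector space with
basis `ι` and basis actions `a : ι → ℝ`: the maximum of the actions of the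
basis elements appearing, with `𝒜(0) = ⊥`. -/
noncomputable def act (a : ι → ℝ) (v : ι →₀ ZMod 2) : EReal :=
  v.support.sup fun i => ((a i : ℝ) : EReal)

/-- A subspace `W ⊆ im ∂` is `ε`-robust if every nonzero `ζ ∈ W` is: every `y`
with `∂y = ζ` satisfies `𝒜(y) − 𝒜(ζ) > ε`. -/
def IsRobust (a : ι → ℝ) (d : (ι →₀ ZMod 2) →ₗ[ZMod 2] (ι →₀ ZMod 2)) (ε : ℝ)
    (W : Submodule (ZMod 2) (ι →₀ ZMod 2)) : Prop :=
  W ≤ LinearMap.range d ∧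
    ∀ ζ ∈ W, ζ ≠ 0 → ∀ y, d y = ζ → act a ζ + (ε : EReal) < act a y

/-- `b*_ε(𝒞)`: the maximal dimension of an `ε`-robust subspace of `im ∂`,
i.e. the number of finite bars of length `> ε`. -/
noncomputable def bstar (a : ι → ℝ)
    (d : (ι →₀ ZMod 2) →ₗ[ZMod 2] (ι →₀ ZMod 2)) (ε : ℝ) : ℕ :=
  sSup {n : ℕ | ∃ W : Submodule (ZMod 2) (ι →₀ ZMod 2),
    IsRobust a d ε W ∧ Module.finrank (ZMod 2) W = n}

/-- `b_ε(𝒞) = b*_ε(𝒞) + dim H(𝒞)`, where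
`dim H(𝒞) = dim ker ∂ − dim im ∂` counts the infinite bars. -/
noncomputable def bEps (a : ι → ℝ)
    (d : (ι →₀ ZMod 2) →ₗ[ZMod 2] (ι →₀ ZMod 2)) (ε : ℝ) : ℕ :=
  bstar a d ε +
    (Module.finrank (ZMod 2) (LinearMap.ker d) -
      Module.finrank (ZMod 2) (LinearMap.range d))

/-- `(𝒞',∂')`, spanned by the basis vectors indexed by `S`, is `ε`-isolated in
`(𝒞,∂)`: (i) for every nonzero `y ∈ 𝒞'`, `𝒜(y) − 𝒜((∂−∂')y) > ε`; (ii) for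
every nonzero `y ∈ (𝒞')^⊥` and `ζ ∈ 𝒞'` with `ζ + ∂y ∈ (𝒞')^⊥`,
`𝒜(y) − 𝒜(ζ) > ε`. -/
def IsIsolated (a : ι → ℝ) (d d' : (ι →₀ ZMod 2) →ₗ[ZMod 2] (ι →₀ ZMod 2))
    (S : Set ι) (ε : ℝ) : Prop :=
  (∀ y ∈ Finsupp.supported (ZMod 2) (ZMod 2) S, y ≠ 0 →
      act a ((d - d') y) + (ε : EReal) < act a y) ∧
  (∀ y ∈ Finsupp.supported (ZMod 2) (ZMod 2) Sᶜ, y ≠ 0 →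
      ∀ ζ ∈ Finsupp.supported (ZMod 2) (ZMod 2) S,
        ζ + d y ∈ Finsupp.supported (ZMod 2) (ZMod 2) Sᶜ →
        act a ζ + (ε : EReal) < act a y)

section ZModTwo

variable {V : Type*} [AddCommGroup V] [Module (ZMod 2) V] {κ : Type*} [Fintype κ]

theorem sum_smul_eq_sum_filter_ne_zero (c : κ → ZMod 2) (f : κ → V) :
    ∑ i, c i • f i = ∑ i with c i ≠ 0, f i := by
  calc ∑ i, c i • f i = ∑ i with c i ≠ 0, c i • f i :=
        (Finset.sum_filter_of_ne (p := fun i => c i ≠ 0) fun i _ hi hc =>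
          hi (by rw [hc, zero_smul])).symm
    _ = ∑ i with c i ≠ 0, f i := Finset.sum_congr rfl fun i hi => by
        rw [(by decide : ∀ x : ZMod 2, x ≠ 0 → x = 1) _ (Finset.mem_filter.1 hi).2, one_smul]

theorem exists_finset_nonempty_sum_eq_of_mem_span_range {f : κ → V} {x : V}
    (hx : x ∈ Submodule.span (ZMod 2) (Set.range f)) (hx0 : x ≠ 0) :
    ∃ U : Finset κ, U.Nonempty ∧ ∑ i ∈ U, f i = x := by
  classical
  obtain ⟨c, rfl⟩ := (Submodule.mem_span_range_iff_exists_fun (ZMod 2)).1 hx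
  rw [sum_smul_eq_sum_filter_ne_zero] at hx0 ⊢
  exact ⟨_, Finset.nonempty_of_sum_ne_zero hx0, rfl⟩

theorem linearIndependent_of_finset_sum_ne_zero {f : κ → V}
    (hf : ∀ U : Finset κ, U.Nonempty → ∑ i ∈ U, f i ≠ 0) : LinearIndependent (ZMod 2) f := by
  classical
  refine Fintype.linearIndependent_iff.2 fun c hc i => ?_
  by_contra hi
  rw [sum_smul_eq_sum_filter_ne_zero] at hc
  exact hf _ ⟨i, Finset.mem_filter.2 ⟨Finset.mem_univ i, hi⟩⟩ hc

end ZModTwo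

theorem Submodule.finrank_add_finrank_le_finrank_add_finrank_inf {K V : Type*} [DivisionRing K]
    [AddCommGroup V] [Module K V] [FiniteDimensional K V] {A B C : Submodule K V}
    (hA : A ≤ C) (hB : B ≤ C) :
    Module.finrank K A + Module.finrank K B ≤ Module.finrank K C + Module.finrank K ↥(A ⊓ B) := by
  rw [← Submodule.finrank_sup_add_finrank_inf_eq]
  exact Nat.add_le_add_right (Submodule.finrank_mono (sup_le hA hB)) _

section Action

variable {ι : Type*} {a : ι → ℝ}

@[simp]
theorem act_zero : act a 0 = ⊥ := by
  simp [act]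

theorem le_act_of_mem_support {v : ι →₀ ZMod 2} {i : ι} (h : i ∈ v.support) :
    (a i : EReal) ≤ act a v :=
  Finset.le_sup (f := fun i => (a i : EReal)) h

theorem exists_mem_support_act_eq {v : ι →₀ ZMod 2} (h : v ≠ 0) :
    ∃ i ∈ v.support, act a v = a i :=
  Finset.exists_mem_eq_sup _ (support_nonempty_iff.2 h) _

theorem bot_lt_act {v : ι →₀ ZMod 2} (h : v ≠ 0) : ⊥ < act a v := by
  obtain ⟨i, -, hi⟩ := exists_mem_support_act_eq (a := a) h
  exact hi ▸ EReal.bot_lt_coe _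

theorem act_add_le (v w : ι →₀ ZMod 2) : act a (v + w) ≤ max (act a v) (act a w) := by
  classical exact (Finset.sup_mono support_add).trans_eq Finset.sup_union

theorem act_add_lt {v w : ι →₀ ZMod 2} {c : EReal} (hv : act a v < c) (hw : act a w < c) :
    act a (v + w) < c :=
  (act_add_le v w).trans_lt (max_lt hv hw)

theorem act_add_add_lt {v w : ι →₀ ZMod 2} {ε : ℝ} {c : EReal} (hv : act a v + ε < c)
    (hw : act a w + ε < c) : act a (v + w) + ε < c :=
  calc act a (v + w) + ε ≤ max (act a v) (act a w) + ε := by gcongr; exact act_add_le v w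
    _ = max (act a v + ε) (act a w + ε) := (max_add_add_right _ _ _).symm
    _ < c := max_lt hv hw

theorem act_add_of_act_lt {v w : ι →₀ ZMod 2} (h : act a w < act a v) :
    act a (v + w) = act a v := by
  refine le_antisymm ((act_add_le v w).trans_eq (max_eq_left h.le)) ?_
  have hv := act_add_le (a := a) (v + w) w
  rw [add_assoc, ZModModule.add_self, add_zero] at hv
  exact (le_max_iff.1 hv).resolve_right h.not_ge

theorem act_sum_le {κ : Type*} (U : Finset κ) (f : κ → ι →₀ ZMod 2) :
    act a (∑ i ∈ U, f i) ≤ U.sup fun i => act a (f i) :=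
  Finset.sum_induction f (fun v => act a v ≤ U.sup fun i => act a (f i))
    (fun _ _ hv hw => (act_add_le _ _).trans (max_le hv hw)) (by simp)
    fun i hi => Finset.le_sup (f := fun i => act a (f i)) hi

theorem act_filter_le (p : ι → Prop) [DecidablePred p] (v : ι →₀ ZMod 2) :
    act a (v.filter p) ≤ act a v :=
  Finset.sup_mono (support_filter p v ▸ Finset.filter_subset _ _)

theorem act_le_of_add_mem_supported_compl {S : Set ι} {v w : ι →₀ ZMod 2}
    (hv : v ∈ supported (ZMod 2) (ZMod 2) S) (hvw : v + w ∈ supported (ZMod 2) (ZMod 2) Sᶜ) :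
    act a v ≤ act a w := by
  refine Finset.sup_le fun i hi => le_act_of_mem_support ?_
  have hi0 : (v + w) i = 0 :=
    notMem_support_iff.1 fun h => hvw h (hv (Finset.mem_coe.2 hi))
  rw [mem_support_iff] at hi ⊢
  rw [Finsupp.add_apply, add_eq_zero_iff_eq_neg, ZModModule.neg_eq_self] at hi0
  exact hi0 ▸ hi

end Action

theorem injective_act_of_pairwise_disjoint {ι κ : Type*} {a : ι → ℝ} (ha : Function.Injective a)
    {S : κ → Set ι} {ξ : κ → ι →₀ ZMod 2} (hS : ∀ i, ξ i ∈ supported (ZMod 2) (ZMod 2) (S i))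
    (h0 : ∀ i, ξ i ≠ 0)
    (hdisj : Pairwise fun i j => supported (ZMod 2) (ZMod 2) (S i) ⊓
      supported (ZMod 2) (ZMod 2) (S j) = ⊥) :
    Function.Injective fun i => act a (ξ i) := by
  intro i j hij
  by_contra hne
  obtain ⟨c, hc, hci⟩ := exists_mem_support_act_eq (a := a) (h0 i)
  obtain ⟨c', hc', hcj⟩ := exists_mem_support_act_eq (a := a) (h0 j)
  obtain rfl : c = c' := ha (EReal.coe_injective (hci.symm.trans (hij.trans hcj)))
  have hmem : single c (1 : ZMod 2) ∈ supported (ZMod 2) (ZMod 2) (S i) ⊓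
      supported (ZMod 2) (ZMod 2) (S j) :=
    ⟨single_mem_supported _ _ (hS i hc), single_mem_supported _ _ (hS j hc')⟩
  rw [hdisj hne, Submodule.mem_bot, single_eq_zero] at hmem
  exact one_ne_zero hmem

section Isolated

variable {ι : Type*} {a : ι → ℝ} {d d' : (ι →₀ ZMod 2) →ₗ[ZMod 2] (ι →₀ ZMod 2)} {S : Set ι}
  {ε : ℝ}

theorem filter_add_mem_supported_compl (v : ι →₀ ZMod 2) [DecidablePred (· ∈ S)] :
    v.filter (· ∈ S) + v ∈ supported (ZMod 2) (ZMod 2) Sᶜ := by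
  intro i hi
  by_contra hiS
  rw [Set.notMem_compl_iff] at hiS
  simp [hiS, ZModModule.add_self] at hi

theorem IsIsolated.exists_approx_boundary (hiso : IsIsolated a d d' S ε)
    {y : ι →₀ ZMod 2} (hy : y ≠ 0) :
    ∃ u ∈ supported (ZMod 2) (ZMod 2) S, ∃ ρ ∈ supported (ZMod 2) (ZMod 2) S,
      d y + d' u + ρ ∈ supported (ZMod 2) (ZMod 2) Sᶜ ∧ act a ρ + ε < act a y := by
  classical
  have hS (v : ι →₀ ZMod 2) : v.filter (· ∈ S) ∈ supported (ZMod 2) (ZMod 2) S :=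
    (restrictDom (ZMod 2) (ZMod 2) S v).2
  set u := y.filter (· ∈ S)
  set w := y.filter (· ∉ S)
  have hu : u ∈ supported (ZMod 2) (ZMod 2) S := hS y
  have hw : w ∈ supported (ZMod 2) (ZMod 2) Sᶜ := (restrictDom (ZMod 2) (ZMod 2) Sᶜ y).2
  set ρ₁ := ((d - d') u).filter (· ∈ S)
  set ρ₂ := (d w).filter (· ∈ S)
  refine ⟨u, hu, ρ₁ + ρ₂, Submodule.add_mem _ (hS _) (hS _), ?_, ?_⟩
  · have hdy : d y + d' u = (d - d') u + d w := by
      rw [← filter_add_filter_not y (· ∈ S), map_add, LinearMap.sub_apply,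
        ZModModule.sub_eq_add]
      abel
    rw [hdy, add_add_add_comm, add_comm ((d - d') u), add_comm (d w)]
    exact Submodule.add_mem _ (filter_add_mem_supported_compl _)
      (filter_add_mem_supported_compl _)
  · refine act_add_add_lt ?_ ?_
    · rcases eq_or_ne u 0 with hu0 | hu0
      · simp [ρ₁, hu0, filter_zero, bot_lt_act hy]
      · calc act a ρ₁ + ε ≤ act a ((d - d') u) + ε := by gcongr; exact act_filter_le _ _
          _ < act a u := hiso.1 u hu hu0
          _ ≤ act a y := act_filter_le _ _
    · rcases eq_or_ne w 0 with hw0 | hw0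
      · simp [ρ₂, hw0, filter_zero, bot_lt_act hy]
      · calc act a ρ₂ + ε < act a w :=
            hiso.2 w hw hw0 ρ₂ (hS _) (filter_add_mem_supported_compl _)
          _ ≤ act a y := act_filter_le _ _

def nontrivialCycles (d' : (ι →₀ ZMod 2) →ₗ[ZMod 2] (ι →₀ ZMod 2)) (S : Set ι) :
    Set (ι →₀ ZMod 2) :=
  {x | x ∈ supported (ZMod 2) (ZMod 2) S ∧ d' x = 0 ∧
    ∀ y ∈ supported (ZMod 2) (ZMod 2) S, d' y ≠ x}

theorem add_mem_nontrivialCycles (hd' : d' ∘ₗ d' = 0)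
    (hsub : ∀ y ∈ supported (ZMod 2) (ZMod 2) S, d' y ∈ supported (ZMod 2) (ZMod 2) S)
    {x u : ι →₀ ZMod 2} (hx : x ∈ nontrivialCycles d' S)
    (hu : u ∈ supported (ZMod 2) (ZMod 2) S) :
    x + d' u ∈ nontrivialCycles d' S := by
  obtain ⟨hxS, hx0, hxb⟩ := hx
  refine ⟨Submodule.add_mem _ hxS (hsub u hu), ?_, fun y hy hyx => ?_⟩
  · rw [map_add, hx0, ← LinearMap.comp_apply, hd', LinearMap.zero_apply, add_zero]
  · exact hxb (y - u) (Submodule.sub_mem _ hy hu) (by rw [map_sub, hyx, add_sub_cancel_right])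

/-- Quasi `ε`-robustness: `∂y = x + τ` with `𝒜(τ) < 𝒜(x)` forces `𝒜(y) − 𝒜(x) > ε`; over
`ZMod 2` the error term is `τ = ∂y + x`. -/
def IsQuasiRobust (a : ι → ℝ) (d : (ι →₀ ZMod 2) →ₗ[ZMod 2] (ι →₀ ZMod 2)) (ε : ℝ)
    (x : ι →₀ ZMod 2) : Prop :=
  ∀ y, act a (d y + x) < act a x → act a x + ε < act a y

theorem IsIsolated.isQuasiRobust_of_forall_act_le (hiso : IsIsolated a d d' S ε)
    (hd' : d' ∘ₗ d' = 0)
    (hsub : ∀ y ∈ supported (ZMod 2) (ZMod 2) S, d' y ∈ supported (ZMod 2) (ZMod 2) S)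
    {ξ : ι →₀ ZMod 2} (hξ : ξ ∈ nontrivialCycles d' S)
    (hmin : ∀ x ∈ nontrivialCycles d' S, act a ξ ≤ act a x) : IsQuasiRobust a d ε ξ := by
  intro y hy
  by_contra! hyξ
  have hy0 : y ≠ 0 := by
    rintro rfl
    simp at hy
  obtain ⟨u, hu, ρ, hρ, hdy, hρy⟩ := hiso.exists_approx_boundary hy0
  have hρξ : act a ρ < act a ξ :=
    lt_of_add_lt_add_right (hρy.trans_le hyξ)
  have hlow : act a (ξ + d' u + ρ) < act a ξ := by
    refine (act_le_of_add_mem_supported_compl (S := S) ?_ ?_).trans_lt hy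
    · exact Submodule.add_mem _ (Submodule.add_mem _ hξ.1 (hsub u hu)) hρ
    · convert hdy using 1
      calc ξ + d' u + ρ + (d y + ξ) = (ξ + ξ) + (d y + d' u + ρ) := by abel
        _ = d y + d' u + ρ := by rw [ZModModule.add_self, zero_add]
  have : act a (ξ + d' u) < act a ξ := by
    have := act_add_lt hlow hρξ
    rwa [add_assoc, ZModModule.add_self, add_zero] at this
  exact this.not_ge (hmin _ (add_mem_nontrivialCycles hd' hsub hξ hu))

theorem IsIsolated.exists_isQuasiRobust_cycle [Finite ι] (hiso : IsIsolated a d d' S ε)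
    (hd' : d' ∘ₗ d' = 0)
    (hsub : ∀ y ∈ supported (ZMod 2) (ZMod 2) S, d' y ∈ supported (ZMod 2) (ZMod 2) S)
    (hhom : (nontrivialCycles d' S).Nonempty) :
    ∃ ξ ∈ supported (ZMod 2) (ZMod 2) S, ξ ≠ 0 ∧ act a (d ξ) + ε < act a ξ ∧
      IsQuasiRobust a d ε ξ := by
  have : Finite (ι →₀ ZMod 2) := .of_equiv _ equivFunOnFinite.symm
  obtain ⟨ξ, hξ, hmin⟩ := Set.exists_min_image _ (act a) (Set.toFinite _) hhom
  have hξ0 : ξ ≠ 0 := fun h => hξ.2.2 0 (Submodule.zero_mem _) (by rw [map_zero, h])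
  have hgap := hiso.1 ξ hξ.1 hξ0
  rw [LinearMap.sub_apply, hξ.2.1, sub_zero] at hgap
  exact ⟨ξ, hξ.1, hξ0, hgap, hiso.isQuasiRobust_of_forall_act_le hd' hsub hξ hmin⟩

end Isolated

section Families

variable {ι : Type*} {a : ι → ℝ} {d : (ι →₀ ZMod 2) →ₗ[ZMod 2] (ι →₀ ZMod 2)} {ε : ℝ}

theorem IsQuasiRobust.add_of_act_lt {x r : ι →₀ ZMod 2} (hx : IsQuasiRobust a d ε x)
    (hr : act a r < act a x) : IsQuasiRobust a d ε (x + r) := by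
  intro y hy
  rw [act_add_of_act_lt hr] at hy ⊢
  refine hx y ?_
  have := act_add_lt hy hr
  rwa [add_assoc, add_assoc, ZModModule.add_self, add_zero] at this

theorem IsQuasiRobust.lt_act_of_map_eq {x y : ι →₀ ZMod 2} (hx : IsQuasiRobust a d ε x)
    (hx0 : x ≠ 0) (hy : d y = x) : act a x + ε < act a y :=
  hx y (by rw [hy, ZModModule.add_self, act_zero]; exact bot_lt_act hx0)

def HasLowerPrimitive (a : ι → ℝ) (d : (ι →₀ ZMod 2) →ₗ[ZMod 2] (ι →₀ ZMod 2))
    (x : ι →₀ ZMod 2) : Prop :=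
  ∃ w, d w = d x ∧ act a w < act a x

theorem HasLowerPrimitive.of_add {x r : ι →₀ ZMod 2} (h : HasLowerPrimitive a d (x + r))
    (hr : act a r < act a x) : HasLowerPrimitive a d x := by
  obtain ⟨w, hw, hwx⟩ := h
  rw [act_add_of_act_lt hr] at hwx
  refine ⟨w + r, ?_, act_add_lt hwx hr⟩
  rw [map_add, hw, map_add, add_assoc, ZModModule.add_self, add_zero]

variable {κ : Type*} {f : κ → ι →₀ ZMod 2}

theorem exists_finset_sum_eq_add_act_lt (hf : Function.Injective fun i => act a (f i))
    (h0 : ∀ i, f i ≠ 0) {U : Finset κ} (hU : U.Nonempty) :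
    ∃ i ∈ U, (∀ j ∈ U, act a (f j) ≤ act a (f i)) ∧
      ∃ r, ∑ j ∈ U, f j = f i + r ∧ act a r < act a (f i) := by
  classical
  obtain ⟨i, hi, hmax⟩ := U.exists_max_image (fun j => act a (f j)) hU
  refine ⟨i, hi, hmax, _, (U.add_sum_erase f hi).symm, ?_⟩
  refine (act_sum_le _ _).trans_lt ((Finset.sup_lt_iff (bot_lt_act (h0 i))).2 fun j hj => ?_)
  exact (hmax j (Finset.mem_of_mem_erase hj)).lt_of_ne (hf.ne (Finset.ne_of_mem_erase hj))

theorem finset_sum_ne_zero_of_injective_act (hf : Function.Injective fun i => act a (f i))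
    (h0 : ∀ i, f i ≠ 0) {U : Finset κ} (hU : U.Nonempty) : ∑ i ∈ U, f i ≠ 0 := by
  obtain ⟨i, -, -, r, hsum, hr⟩ := exists_finset_sum_eq_add_act_lt hf h0 hU
  intro h
  have := bot_lt_act (a := a) (h0 i)
  rw [← act_add_of_act_lt hr, ← hsum, h, act_zero] at this
  exact lt_irrefl _ this

theorem isQuasiRobust_finset_sum (hf : Function.Injective fun i => act a (f i))
    (h0 : ∀ i, f i ≠ 0) (hq : ∀ i, IsQuasiRobust a d ε (f i)) {U : Finset κ} (hU : U.Nonempty) :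
    IsQuasiRobust a d ε (∑ i ∈ U, f i) := by
  obtain ⟨i, -, -, r, hsum, hr⟩ := exists_finset_sum_eq_add_act_lt hf h0 hU
  exact hsum ▸ (hq i).add_of_act_lt hr

theorem not_hasLowerPrimitive_finset_sum (hf : Function.Injective fun i => act a (f i))
    (h0 : ∀ i, f i ≠ 0) (hlow : ∀ i, ¬ HasLowerPrimitive a d (f i)) {U : Finset κ}
    (hU : U.Nonempty) : ¬ HasLowerPrimitive a d (∑ i ∈ U, f i) := by
  obtain ⟨i, -, -, r, hsum, hr⟩ := exists_finset_sum_eq_add_act_lt hf h0 hU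
  exact hsum ▸ fun h => hlow i (h.of_add hr)

theorem act_map_finset_sum_add_lt (hf : Function.Injective fun i => act a (f i))
    (h0 : ∀ i, f i ≠ 0) (hgap : ∀ i, act a (d (f i)) + ε < act a (f i)) {U : Finset κ}
    (hU : U.Nonempty) : act a (d (∑ i ∈ U, f i)) + ε < act a (∑ i ∈ U, f i) := by
  obtain ⟨i, -, hmax, r, hsum, hr⟩ := exists_finset_sum_eq_add_act_lt hf h0 hU
  obtain ⟨k, hk, hsup⟩ := U.exists_mem_eq_sup hU fun j => act a (d (f j))
  calc act a (d (∑ j ∈ U, f j)) + ε ≤ act a (d (f k)) + ε := by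
        gcongr
        exact map_sum d f U ▸ (act_sum_le _ _).trans_eq hsup
    _ < act a (f k) := hgap k
    _ ≤ act a (f i) := hmax k hk
    _ = act a (∑ j ∈ U, f j) := by rw [hsum, act_add_of_act_lt hr]

end Families

section Bars

variable {ι : Type*} [Fintype ι] {a : ι → ℝ} {d : (ι →₀ ZMod 2) →ₗ[ZMod 2] (ι →₀ ZMod 2)}
  {ε : ℝ} {κ : Type*} [Fintype κ] {f : κ → ι →₀ ZMod 2}

theorem IsRobust.finrank_le_bstar {W : Submodule (ZMod 2) (ι →₀ ZMod 2)}
    (hW : IsRobust a d ε W) : Module.finrank (ZMod 2) W ≤ bstar a d ε :=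
  le_csSup ⟨Module.finrank (ZMod 2) (ι →₀ ZMod 2), by
    rintro _ ⟨W, -, rfl⟩
    exact Submodule.finrank_le W⟩ ⟨W, hW, rfl⟩

theorem card_le_bstar_of_forall_not_hasLowerPrimitive
    (hf : Function.Injective fun i => act a (f i)) (h0 : ∀ i, f i ≠ 0)
    (hgap : ∀ i, act a (d (f i)) + ε < act a (f i))
    (hlow : ∀ i, ¬ HasLowerPrimitive a d (f i)) : Fintype.card κ ≤ bstar a d ε := by
  have hsum (U : Finset κ) (hU : U.Nonempty) : ∑ i ∈ U, d (f i) ≠ 0 := by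
    rw [← map_sum]
    intro h
    refine not_hasLowerPrimitive_finset_sum hf h0 hlow hU ⟨0, by rw [map_zero, h], ?_⟩
    rw [act_zero]
    exact bot_lt_act (finset_sum_ne_zero_of_injective_act hf h0 hU)
  have hW : IsRobust a d ε (Submodule.span (ZMod 2) (Set.range fun i => d (f i))) := by
    refine ⟨Submodule.span_le.2 (Set.range_subset_iff.2 fun i => ⟨f i, rfl⟩),
      fun ζ hζ hζ0 y hy => ?_⟩
    obtain ⟨U, hU, rfl⟩ := exists_finset_nonempty_sum_eq_of_mem_span_range hζ hζ0
    rw [← map_sum] at hy ⊢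
    have hle : act a (∑ i ∈ U, f i) ≤ act a y :=
      not_lt.1 fun h => not_hasLowerPrimitive_finset_sum hf h0 hlow hU ⟨y, hy, h⟩
    exact (act_map_finset_sum_add_lt hf h0 hgap hU).trans_le hle
  calc Fintype.card κ = Module.finrank (ZMod 2) (Submodule.span (ZMod 2)
        (Set.range fun i => d (f i))) :=
        (finrank_span_eq_card (linearIndependent_of_finset_sum_ne_zero hsum)).symm
    _ ≤ bstar a d ε := hW.finrank_le_bstar

theorem card_add_finrank_range_le_of_forall_hasLowerPrimitive (hd : d ∘ₗ d = 0)
    (hf : Function.Injective fun i => act a (f i)) (h0 : ∀ i, f i ≠ 0)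
    (hq : ∀ i, IsQuasiRobust a d ε (f i)) (hlow : ∀ i, HasLowerPrimitive a d (f i)) :
    Fintype.card κ + Module.finrank (ZMod 2) (LinearMap.range d) ≤
      Module.finrank (ZMod 2) (LinearMap.ker d) + bstar a d ε := by
  choose w hw hwf using hlow
  set z := fun i => f i + w i
  have hz_act (i : κ) : act a (z i) = act a (f i) := act_add_of_act_lt (hwf i)
  have hz0 (i : κ) : z i ≠ 0 := fun h =>
    (bot_lt_act (h0 i)).ne' (by rw [← hz_act, h, act_zero])
  have hzf : Function.Injective fun i => act a (z i) := fun i j h =>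
    hf (by simpa [hz_act] using h)
  have hzq (i : κ) : IsQuasiRobust a d ε (z i) := (hq i).add_of_act_lt (hwf i)
  have hZ : Submodule.span (ZMod 2) (Set.range z) ≤ LinearMap.ker d :=
    Submodule.span_le.2 <| Set.range_subset_iff.2 fun i => by
      simp [z, hw i, ZModModule.add_self]
  have hW : IsRobust a d ε (Submodule.span (ZMod 2) (Set.range z) ⊓ LinearMap.range d) := by
    refine ⟨inf_le_right, fun ζ hζ hζ0 y hy => ?_⟩
    obtain ⟨U, hU, rfl⟩ := exists_finset_nonempty_sum_eq_of_mem_span_range hζ.1 hζ0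
    exact (isQuasiRobust_finset_sum hzf hz0 hzq hU).lt_act_of_map_eq hζ0 hy
  have hcard : Module.finrank (ZMod 2) (Submodule.span (ZMod 2) (Set.range z)) =
      Fintype.card κ := finrank_span_eq_card (linearIndependent_of_finset_sum_ne_zero
        fun U hU => finset_sum_ne_zero_of_injective_act hzf hz0 hU)
  calc Fintype.card κ + Module.finrank (ZMod 2) (LinearMap.range d)
      ≤ Module.finrank (ZMod 2) (LinearMap.ker d) + Module.finrank (ZMod 2)
          ↥(Submodule.span (ZMod 2) (Set.range z) ⊓ LinearMap.range d) :=
        hcard ▸ Submodule.finrank_add_finrank_le_finrank_add_finrank_inf hZ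
          (LinearMap.range_le_ker_iff.2 hd)
    _ ≤ _ := Nat.add_le_add_left hW.finrank_le_bstar _

theorem card_le_bstar_add_bEps (hd : d ∘ₗ d = 0) (hf : Function.Injective fun i => act a (f i))
    (h0 : ∀ i, f i ≠ 0) (hgap : ∀ i, act a (d (f i)) + ε < act a (f i))
    (hq : ∀ i, IsQuasiRobust a d ε (f i)) : Fintype.card κ ≤ bstar a d ε + bEps a d ε := by
  classical
  let P i := HasLowerPrimitive a d (f i)
  have hP := card_add_finrank_range_le_of_forall_hasLowerPrimitive hd
    (f := fun i : {i // P i} => f i) (hf.comp Subtype.val_injective) (fun i => h0 i)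
    (fun i => hq i) fun i => i.2
  have hnP := card_le_bstar_of_forall_not_hasLowerPrimitive
    (f := fun i : {i // ¬ P i} => f i) (hf.comp Subtype.val_injective) (fun i => h0 i)
    (fun i => hgap i) fun i => i.2
  have hrange := Submodule.finrank_mono (LinearMap.range_le_ker_iff.2 hd)
  have hcompl := Fintype.card_subtype_compl P
  have hle := Fintype.card_subtype_le P
  unfold bEps
  omega

end Bars

theorem bars_from_isolated_subcomplexes_general
    (a : ι → ℝ) (ha : Function.Injective a)
    (d : (ι →₀ ZMod 2) →ₗ[ZMod 2] (ι →₀ ZMod 2)) (hd : d ∘ₗ d = 0)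
    (ε : ℝ) (p : ℕ)
    (S : Fin p → Set ι)
    (d' : Fin p → ((ι →₀ ZMod 2) →ₗ[ZMod 2] (ι →₀ ZMod 2)))
    (hd' : ∀ i, d' i ∘ₗ d' i = 0)
    (hsub : ∀ i, ∀ y ∈ Finsupp.supported (ZMod 2) (ZMod 2) (S i),
      d' i y ∈ Finsupp.supported (ZMod 2) (ZMod 2) (S i))
    (hiso : ∀ i, IsIsolated a d (d' i) (S i) ε)
    (hhom : ∀ i, ∃ ξ ∈ Finsupp.supported (ZMod 2) (ZMod 2) (S i),
      d' i ξ = 0 ∧ ∀ y ∈ Finsupp.supported (ZMod 2) (ZMod 2) (S i), d' i y ≠ ξ)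
    (hdisj : ∀ i j, i ≠ j →
      Finsupp.supported (ZMod 2) (ZMod 2) (S i) ⊓
        Finsupp.supported (ZMod 2) (ZMod 2) (S j) = ⊥) :
    (p : ℝ) / 2 ≤ (bEps a d ε : ℝ) := by
  choose ξ hξS hξ0 hgap hq using fun i =>
    (hiso i).exists_isQuasiRobust_cycle (hd' i) (hsub i) (hhom i)
  have hp := card_le_bstar_add_bEps hd (injective_act_of_pairwise_disjoint ha hξS hξ0 hdisj)
    hξ0 hgap hq
  rw [Fintype.card_fin] at hp
  have hb : bstar a d ε ≤ bEps a d ε := Nat.le_add_right _ _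
  have hp2 : (p : ℝ) ≤ 2 * bEps a d ε := by exact_mod_cast hp.trans (by omega)
  linarith

/-- Proposition 4.2: if `(𝒞₁',∂₁'),…,(𝒞ₚ',∂ₚ')` are `ε`-isolated subcomplexes
of `(𝒞,∂)` with pairwise trivial intersections, each with nonzero homology,
then the number of bars of length `> ε` satisfies `b_ε(𝒞) ≥ p/2`. -/
theorem bars_from_isolated_subcomplexes
    (a : ι → ℝ) (ha : Function.Injective a)
    (d : (ι →₀ ZMod 2) →ₗ[ZMod 2] (ι →₀ ZMod 2)) (hd : d ∘ₗ d = 0)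
    (ε : ℝ) (hε : 0 < ε) (p : ℕ)
    (S : Fin p → Set ι)
    (d' : Fin p → ((ι →₀ ZMod 2) →ₗ[ZMod 2] (ι →₀ ZMod 2)))
    (hd' : ∀ i, d' i ∘ₗ d' i = 0)
    (hsub : ∀ i, ∀ y ∈ Finsupp.supported (ZMod 2) (ZMod 2) (S i),
      d' i y ∈ Finsupp.supported (ZMod 2) (ZMod 2) (S i))
    (hiso : ∀ i, IsIsolated a d (d' i) (S i) ε)
    (hhom : ∀ i, ∃ ξ ∈ Finsupp.supported (ZMod 2) (ZMod 2) (S i),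
      d' i ξ = 0 ∧ ∀ y ∈ Finsupp.supported (ZMod 2) (ZMod 2) (S i), d' i y ≠ ξ)
    (hdisj : ∀ i j, i ≠ j →
      Finsupp.supported (ZMod 2) (ZMod 2) (S i) ⊓
        Finsupp.supported (ZMod 2) (ZMod 2) (S j) = ⊥) :
    (p : ℝ) / 2 ≤ (bEps a d ε : ℝ) :=
  bars_from_isolated_subcomplexes_general a ha d hd ε p S d' hd' hsub hiso hhom hdisj
end
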